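/- For every extensional digraph G, the limit structure 𝕍_ω(G) = (M_ω, E_ω) is itself an extensional digraph: any two elements of M_ω with the same E_ω-predecessors are equal. -/
import Mathlib


/-- An extensional digraph: a set `M` (of ZF-sets) together with a binary relation
`E` on `M` such that any two elements of `M` with the same `E`-predecessors are
equal. -/
structure ExtDigraph where
  /-- The carrier set. -/
  M : ZFSet
  /-- The edge relation. -/
  E : ZFSet → ZFSet → Prop
  dom_left : ∀ x y, E x y → x ∈ M
  dom_right : ∀ x y, E x y → y ∈ M
  ext : ∀ x y, x ∈ M → y ∈ M → (∀ z, E z x ↔ E z y) → x = y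

namespace ExtDigraph

/-- The von Neumann natural number `n` as a ZF-set, used as a tag. -/
def tag : ℕ → ZFSet
  | 0 => ∅
  | n + 1 => insert (tag n) (tag n)

/-- The deficiency of a digraph `(M, E)`: the collection of subsets of `M` which are
not the `E`-predecessor set of any element of `M`. -/
def defic (M : ZFSet) (E : ZFSet → ZFSet → Prop) : ZFSet :=
  (ZFSet.powerset M).sep fun X => ¬ ∃ y, y ∈ M ∧ ∀ z, z ∈ M → (z ∈ X ↔ E z y)

/-- The digraphs `𝕍_n(G) = (M_n, E_n)`, defined recursively:
`M_0 = {0} × M` with `(0,x) E_0 (0,y)` iff `x E y`; and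
`M_{n+1} = M_n ∪ ({n+1} × D(𝕍_n))` where `E_{n+1}` adds the pairs
`(z, (n+1, X))` for `z ∈ X ∈ D(𝕍_n)`. -/
def lvl (G : ExtDigraph) : ℕ → ZFSet × (ZFSet → ZFSet → Prop)
  | 0 =>
    (ZFSet.prod {tag 0} G.M,
      fun a b => ∃ x y, G.E x y ∧ a = ZFSet.pair (tag 0) x ∧ b = ZFSet.pair (tag 0) y)
  | n + 1 =>
    let p := lvl G n
    (p.1 ∪ ZFSet.prod {tag (n + 1)} (defic p.1 p.2),
      fun a b => p.2 a b ∨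
        ∃ X, X ∈ defic p.1 p.2 ∧ b = ZFSet.pair (tag (n + 1)) X ∧ a ∈ X)

/-- The carrier `M_n(G)` of `𝕍_n(G)`. -/
def Mlvl (G : ExtDigraph) (n : ℕ) : ZFSet := (lvl G n).1

/-- The edge relation `E_n(G)` of `𝕍_n(G)`. -/
def Elvl (G : ExtDigraph) (n : ℕ) : ZFSet → ZFSet → Prop := (lvl G n).2

/-- Membership in `M_ω(G) = ⋃_{n<ω} M_n(G)`. -/
def MemMomega (G : ExtDigraph) (x : ZFSet) : Prop := ∃ n, x ∈ Mlvl G n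

/-- The edge relation `E_ω(G) = ⋃_{n<ω} E_n(G)` of `𝕍_ω(G)`. -/
def Eomega (G : ExtDigraph) (a b : ZFSet) : Prop := ∃ n, Elvl G n a b

/-- The carrier of `𝕍_m(G)` for `m ≤ ω` (with `⊤` standing for `ω`), as a class. -/
def MlvlI (G : ExtDigraph) : ℕ∞ → Set ZFSet :=
  WithTop.recTopCoe {x | MemMomega G x} fun n => {x | x ∈ Mlvl G n}

/-- The edge relation of `𝕍_m(G)` for `m ≤ ω` (with `⊤` standing for `ω`). -/
def ElvlI (G : ExtDigraph) : ℕ∞ → ZFSet → ZFSet → Prop :=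
  WithTop.recTopCoe (Eomega G) fun n => Elvl G n

end ExtDigraph

namespace ExtDigraph

variable (G : ExtDigraph)

lemma tag_mem {k m : ℕ} (h : k < m) : tag k ∈ tag m := by
  induction m with
  | zero => omega
  | succ n ih =>
    rcases Nat.lt_succ_iff_lt_or_eq.1 h with h' | h'
    · exact ZFSet.mem_insert_iff.2 (Or.inr (ih h'))
    · subst h'; exact ZFSet.mem_insert_iff.2 (Or.inl rfl)

lemma tag_ne {k m : ℕ} (h : k < m) : tag k ≠ tag m := fun e =>
  ZFSet.mem_irrefl _ (e ▸ tag_mem h)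

lemma Elvl_dom {n : ℕ} {a b : ZFSet} (h : Elvl G n a b) :
    a ∈ Mlvl G n ∧ b ∈ Mlvl G n := by
  induction n with
  | zero =>
    obtain ⟨u, v, huv, ha, hb⟩ := h
    subst ha; subst hb
    exact ⟨ZFSet.pair_mem_prod.2 ⟨ZFSet.mem_singleton.2 rfl, G.dom_left _ _ huv⟩,
      ZFSet.pair_mem_prod.2 ⟨ZFSet.mem_singleton.2 rfl, G.dom_right _ _ huv⟩⟩
  | succ n ih =>
    rcases h with h | ⟨X, hX, hb, ha⟩
    · exact ⟨ZFSet.mem_union.2 (Or.inl (ih h).1), ZFSet.mem_union.2 (Or.inl (ih h).2)⟩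
    · have hXsub : X ⊆ Mlvl G n := ZFSet.mem_powerset.1 (ZFSet.mem_sep.1 hX).1
      refine ⟨ZFSet.mem_union.2 (Or.inl (hXsub ha)), ZFSet.mem_union.2 (Or.inr ?_)⟩
      rw [hb]
      exact ZFSet.pair_mem_prod.2 ⟨ZFSet.mem_singleton.2 rfl, hX⟩

lemma mem_Mlvl_pair {n : ℕ} {x : ZFSet} (h : x ∈ Mlvl G n) :
    ∃ k ≤ n, ∃ w, x = ZFSet.pair (tag k) w := by
  induction n with
  | zero =>
    obtain ⟨a, ha, b, hb, hx⟩ := ZFSet.mem_prod.1 h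
    exact ⟨0, le_rfl, b, by rw [hx, ZFSet.mem_singleton.1 ha]⟩
  | succ n ih =>
    rcases ZFSet.mem_union.1 h with h | h
    · obtain ⟨k, hk, w, hw⟩ := ih h
      exact ⟨k, Nat.le_succ_of_le hk, w, hw⟩
    · obtain ⟨a, ha, b, _, hx⟩ := ZFSet.mem_prod.1 h
      exact ⟨n + 1, le_rfl, b, by rw [hx, ZFSet.mem_singleton.1 ha]⟩

lemma Mlvl_mono {n m : ℕ} (h : n ≤ m) {x : ZFSet} (hx : x ∈ Mlvl G n) :
    x ∈ Mlvl G m := by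
  induction m with
  | zero => simpa [Nat.le_zero.1 h] using hx
  | succ m ih =>
    rcases Nat.le_succ_iff.1 h with h' | h'
    · exact ZFSet.mem_union.2 (Or.inl (ih h'))
    · subst h'; exact hx

lemma Elvl_mono {n m : ℕ} (h : n ≤ m) {a b : ZFSet} (hab : Elvl G n a b) :
    Elvl G m a b := by
  induction m with
  | zero => simpa [Nat.le_zero.1 h] using hab
  | succ m ih =>
    rcases Nat.le_succ_iff.1 h with h' | h'
    · exact Or.inl (ih h')
    · subst h'; exact hab

lemma Elvl_back {n : ℕ} {x z : ZFSet} (hx : x ∈ Mlvl G n)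
    (h : Elvl G (n + 1) z x) : Elvl G n z x := by
  rcases h with h | ⟨X, _, hXx, _⟩
  · exact h
  · obtain ⟨k, hk, w, hw⟩ := mem_Mlvl_pair G hx
    rw [hw] at hXx
    exact absurd (ZFSet.pair_injective hXx).1 (tag_ne (Nat.lt_succ_of_le hk))

lemma Elvl_stable {n m : ℕ} (h : n ≤ m) {x z : ZFSet} (hx : x ∈ Mlvl G n)
    (he : Elvl G m z x) : Elvl G n z x := by
  induction m with
  | zero => simpa [Nat.le_zero.1 h] using he
  | succ m ih =>
    rcases Nat.le_succ_iff.1 h with h' | h'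
    · exact ih h' (Elvl_back G (Mlvl_mono G h' hx) he)
    · subst h'; exact he

lemma not_new_mem {n : ℕ} {X : ZFSet} : ZFSet.pair (tag (n + 1)) X ∉ Mlvl G n := by
  intro hm
  obtain ⟨k, hk, w, hw⟩ := mem_Mlvl_pair G hm
  exact tag_ne (Nat.lt_succ_of_le hk) ((ZFSet.pair_injective hw).1).symm

lemma Vn_ext (n : ℕ) {x y : ZFSet} (hx : x ∈ Mlvl G n) (hy : y ∈ Mlvl G n)
    (h : ∀ z, Elvl G n z x ↔ Elvl G n z y) : x = y := by
  induction n with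
  | zero =>
    obtain ⟨a, ha, b, hb, hxe⟩ := ZFSet.mem_prod.1 hx
    obtain ⟨a', ha', b', hb', hye⟩ := ZFSet.mem_prod.1 hy
    rw [ZFSet.mem_singleton.1 ha] at hxe
    rw [ZFSet.mem_singleton.1 ha'] at hye
    subst hxe; subst hye
    suffices hb : b = b' by rw [hb]
    refine G.ext b b' hb hb' fun z => ⟨fun hz => ?_, fun hz => ?_⟩
    · obtain ⟨u, v, huv, h1, h2⟩ := (h _).1 ⟨z, b, hz, rfl, rfl⟩
      obtain ⟨e1, e2⟩ := ZFSet.pair_injective h1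
      obtain ⟨e3, e4⟩ := ZFSet.pair_injective h2
      rwa [e2, e4]
    · obtain ⟨u, v, huv, h1, h2⟩ := (h _).2 ⟨z, b', hz, rfl, rfl⟩
      obtain ⟨e1, e2⟩ := ZFSet.pair_injective h1
      obtain ⟨e3, e4⟩ := ZFSet.pair_injective h2
      rwa [e2, e4]
  | succ n ih =>
    -- helper: a "new" element and an "old" element can't have the same preds
    have key : ∀ x y : ZFSet, x ∈ Mlvl G n →
        (∀ X, X ∈ defic (Mlvl G n) (Elvl G n) → y = ZFSet.pair (tag (n + 1)) X →
          (∀ z, Elvl G (n+1) z x ↔ Elvl G (n+1) z y) → False) := by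
      intro x y hx X hX hyX hzz
      have hne : ∀ z, Elvl G n z x ↔ z ∈ X := by
        intro z
        constructor
        · intro hz
          rcases (hzz z).1 (Or.inl hz) with h' | ⟨X', hX', hX'e, hzX'⟩
          · exact absurd (hyX ▸ (Elvl_dom G h').2) (not_new_mem G)
          · rw [hyX] at hX'e
            rwa [(ZFSet.pair_injective hX'e).2]
        · intro hz
          have : Elvl G (n+1) z y := Or.inr ⟨X, hX, hyX, hz⟩
          exact Elvl_back G hx ((hzz z).2 this)
      have := (ZFSet.mem_sep.1 hX).2
      exact this ⟨x, hx, fun z _ => ((hne z).symm)⟩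
    rcases ZFSet.mem_union.1 hx with hx' | hx' <;>
      rcases ZFSet.mem_union.1 hy with hy' | hy'
    · exact ih hx' hy' fun z =>
        ⟨fun hz => Elvl_back G hy' ((h z).1 (Or.inl hz)),
         fun hz => Elvl_back G hx' ((h z).2 (Or.inl hz))⟩
    · obtain ⟨a, ha, X, hX, hye⟩ := ZFSet.mem_prod.1 hy'
      rw [ZFSet.mem_singleton.1 ha] at hye
      exact (key x y hx' X hX hye h).elim
    · obtain ⟨a, ha, X, hX, hxe⟩ := ZFSet.mem_prod.1 hx'
      rw [ZFSet.mem_singleton.1 ha] at hxe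
      exact (key y x hy' X hX hxe (fun z => (h z).symm)).elim
    · obtain ⟨a, ha, X, hX, hxe⟩ := ZFSet.mem_prod.1 hx'
      obtain ⟨a', ha', Y, hY, hye⟩ := ZFSet.mem_prod.1 hy'
      rw [ZFSet.mem_singleton.1 ha] at hxe
      rw [ZFSet.mem_singleton.1 ha'] at hye
      subst hxe; subst hye
      suffices hXY : X = Y by rw [hXY]
      have predx : ∀ z, Elvl G (n+1) z (ZFSet.pair (tag (n+1)) X) ↔ z ∈ X := by
        intro z
        constructor
        · rintro (h' | ⟨X', hX', hX'e, hzX'⟩)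
          · exact absurd (Elvl_dom G h').2 (not_new_mem G)
          · rwa [(ZFSet.pair_injective hX'e).2]
        · intro hz; exact Or.inr ⟨X, hX, rfl, hz⟩
      have predy : ∀ z, Elvl G (n+1) z (ZFSet.pair (tag (n+1)) Y) ↔ z ∈ Y := by
        intro z
        constructor
        · rintro (h' | ⟨X', hX', hX'e, hzX'⟩)
          · exact absurd (Elvl_dom G h').2 (not_new_mem G)
          · rwa [(ZFSet.pair_injective hX'e).2]
        · intro hz; exact Or.inr ⟨Y, hY, rfl, hz⟩
      exact ZFSet.ext fun z => by rw [← predx z, h z, predy z]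

end ExtDigraph

open ExtDigraph

/-- **`𝕍_ω(G)` is extensional.** For every extensional digraph `G`, any two
elements of `M_ω(G)` with the same `E_ω`-predecessors are equal. -/
theorem Vomega_extensional (G : ExtDigraph) (x y : ZFSet)
    (hx : MemMomega G x) (hy : MemMomega G y)
    (h : ∀ z, Eomega G z x ↔ Eomega G z y) : x = y := by
  obtain ⟨n, hxn⟩ := hx
  obtain ⟨m, hym⟩ := hy
  set N := max n m with hN
  have hxN : x ∈ Mlvl G N := Mlvl_mono G (le_max_left n m) hxn
  have hyN : y ∈ Mlvl G N := Mlvl_mono G (le_max_right n m) hym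
  refine Vn_ext G N hxN hyN fun z => ⟨fun hz => ?_, fun hz => ?_⟩
  · obtain ⟨k, hk⟩ := (h z).1 ⟨N, hz⟩
    rcases le_total k N with hkN | hkN
    · exact Elvl_mono G hkN hk
    · exact Elvl_stable G hkN hyN hk
  · obtain ⟨k, hk⟩ := (h z).2 ⟨N, hz⟩
    rcases le_total k N with hkN | hkN
    · exact Elvl_mono G hkN hk
    · exact Elvl_stable G hkN hxN hk
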